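/- Let t ∈ ℝ \ ℤ_{≥0} and r > 0. If A(z) = Σ_{k≥0} a_k z^k and B(z) = Σ_{k≥0} b_k z^k are formal power series with ‖A‖_r^{(t)} := Σ_{k≥0} |a_k/(t)_k| r^k < ∞ and ‖B‖_r^{(t)} := Σ_{k≥0} |b_k/(t)_k| r^k < ∞, then A ⊞^t B also satisfies ‖A ⊞^t B‖_r^{(t)} < ∞ and ‖A ⊞^t B‖_r^{(t)} ≤ ‖A‖_r^{(t)} · ‖B‖_r^{(t)}; that is, the space 𝒜_r^{(t)} of such series is closed under ⊞^t and the norm ‖·‖_r^{(t)} is submultiplicative, making (𝒜_r^{(t)}, ⊞^t, ‖·‖_r^{(t)}) a normed algebra. -/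

import Mathlib

open PowerSeries Finset

/-- Falling factorial `(t)_k = t (t-1) ⋯ (t-k+1)`. -/
noncomputable def ffall (t : ℝ) (k : ℕ) : ℝ := ∏ i ∈ Finset.range k, (t - i)

/-- The `t`-deformed convolution of formal power series. -/
noncomputable def tconv (t : ℝ) (A B : PowerSeries ℝ) : PowerSeries ℝ :=
  PowerSeries.mk fun k => ∑ p ∈ Finset.HasAntidiagonal.antidiagonal k,
    ffall t k / (ffall t p.1 * ffall t p.2)
      * (PowerSeries.coeff p.1 A) * (PowerSeries.coeff p.2 B)

/-- Formal logarithm of a power series (with constant term 1):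
`log A = - Σ_{k ≥ 1} (1 - A)^k / k`. -/
noncomputable def flog (A : PowerSeries ℝ) : PowerSeries ℝ :=
  PowerSeries.mk fun n =>
    -∑ k ∈ Finset.range (n + 1), (PowerSeries.coeff (R := ℝ) n ((1 - A) ^ k)) / k

/-- Power sums of `A ∈ 1 + zℝ⟦z⟧`, defined by `Σ p_k(A) z^k = -z (d/dz) log A(z)`. -/
noncomputable def powSum (A : PowerSeries ℝ) (k : ℕ) : ℝ :=
  -(k : ℝ) * PowerSeries.coeff k (flog A)

/-- `E^t[A](z) = Σ_k (t^k/(t)_k) a_k z^k`. -/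
noncomputable def Et (t : ℝ) (A : PowerSeries ℝ) : PowerSeries ℝ :=
  PowerSeries.mk fun k => t ^ k / ffall t k * PowerSeries.coeff k A

/-- The `t`-deformed cumulant transform `C^t[A](z) = -(z/t)(d/dz) log(E^t[A](z))`. -/
noncomputable def Ct (t : ℝ) (A : PowerSeries ℝ) : PowerSeries ℝ :=
  PowerSeries.mk fun n => -(1 / t) * ((n : ℝ) * PowerSeries.coeff n (flog (Et t A)))

/-- The `i`-th `t`-deformed cumulant of `A`. -/
noncomputable def kappa (t : ℝ) (A : PowerSeries ℝ) (i : ℕ) : ℝ :=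
  PowerSeries.coeff i (Ct t A)

/-
Dividing the `k`-th coefficient by `(t)_k` turns `⊞^t` into the ordinary product of power series,
since `(t)_k / ((t)_i (t)_j) · a_i b_j / (t)_k = (a_i / (t)_i) (b_j / (t)_j)`. The norm `‖·‖_r^{(t)}`
is then the weighted `ℓ¹` norm `Σ_k |c_k| r^k` of the rescaled coefficients, which is
submultiplicative for the Cauchy product.
-/

namespace PowerSeries

variable {R : Type*} [NormedRing R] {r : ℝ}

theorem norm_coeff_mul_mul_pow_le (hr : 0 ≤ r) (f g : R⟦X⟧) (n : ℕ) :
    ‖coeff n (f * g)‖ * r ^ n ≤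
      ∑ p ∈ antidiagonal n, (‖coeff p.1 f‖ * r ^ p.1) * (‖coeff p.2 g‖ * r ^ p.2) := by
  rw [coeff_mul]
  calc ‖∑ p ∈ antidiagonal n, coeff p.1 f * coeff p.2 g‖ * r ^ n
      ≤ (∑ p ∈ antidiagonal n, ‖coeff p.1 f‖ * ‖coeff p.2 g‖) * r ^ n := by
        gcongr
        exact (norm_sum_le _ _).trans (sum_le_sum fun p _ => norm_mul_le _ _)
    _ = _ := by
        rw [sum_mul]
        refine sum_congr rfl fun p hp => ?_
        rw [← mem_antidiagonal.1 hp, pow_add]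
        ring

variable {f g : R⟦X⟧}

theorem summable_norm_coeff_mul_mul_pow (hr : 0 ≤ r) (hf : Summable fun k => ‖coeff k f‖ * r ^ k)
    (hg : Summable fun k => ‖coeff k g‖ * r ^ k) :
    Summable fun k => ‖coeff k (f * g)‖ * r ^ k := by
  have hf' := summable_norm_iff.2 hf
  have hg' := summable_norm_iff.2 hg
  exact (summable_sum_mul_antidiagonal_of_summable_norm' hf' hf hg' hg).of_nonneg_of_le
    (fun _ => by positivity) (norm_coeff_mul_mul_pow_le hr f g)

theorem tsum_norm_coeff_mul_mul_pow_le (hr : 0 ≤ r) (hf : Summable fun k => ‖coeff k f‖ * r ^ k)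
    (hg : Summable fun k => ‖coeff k g‖ * r ^ k) :
    ∑' k, ‖coeff k (f * g)‖ * r ^ k ≤
      (∑' k, ‖coeff k f‖ * r ^ k) * ∑' k, ‖coeff k g‖ * r ^ k := by
  have hf' := summable_norm_iff.2 hf
  have hg' := summable_norm_iff.2 hg
  have hcauchy := summable_sum_mul_antidiagonal_of_summable_norm' hf' hf hg' hg
  rw [tsum_mul_tsum_eq_tsum_sum_antidiagonal_of_summable_norm hf' hg']
  exact (summable_norm_coeff_mul_mul_pow hr hf hg).tsum_le_tsum
    (norm_coeff_mul_mul_pow_le hr f g) hcauchy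

end PowerSeries

theorem ffall_ne_zero {t : ℝ} (ht : ∀ n : ℕ, t ≠ n) (k : ℕ) : ffall t k ≠ 0 :=
  prod_ne_zero_iff.2 fun i _ => sub_ne_zero.2 (ht i)

noncomputable def divFfall (t : ℝ) (A : PowerSeries ℝ) : PowerSeries ℝ :=
  PowerSeries.mk fun k => coeff k A / ffall t k

theorem divFfall_tconv {t : ℝ} (ht : ∀ n : ℕ, t ≠ n) (A B : PowerSeries ℝ) :
    divFfall t (tconv t A B) = divFfall t A * divFfall t B := by
  ext n
  simp only [divFfall, tconv, coeff_mk, coeff_mul, sum_div]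
  refine sum_congr rfl fun p _ => ?_
  have := ffall_ne_zero ht n
  have := ffall_ne_zero ht p.1
  have := ffall_ne_zero ht p.2
  field_simp

theorem abs_coeff_div_ffall (t : ℝ) (A : PowerSeries ℝ) (k : ℕ) :
    |coeff k A / ffall t k| = ‖coeff k (divFfall t A)‖ := by
  rw [divFfall, coeff_mk, Real.norm_eq_abs]

/-- For `t ∈ ℝ \ ℤ_{≥0}` and `r > 0`, the space `𝒜_r^{(t)}` of power series with
`‖A‖_r^{(t)} = Σ_k |a_k/(t)_k| r^k < ∞` is closed under `⊞^t` and the norm is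
submultiplicative: `‖A ⊞^t B‖_r^{(t)} ≤ ‖A‖_r^{(t)} ‖B‖_r^{(t)}`. -/
theorem tconv_norm_submultiplicative (t : ℝ) (ht : ∀ n : ℕ, t ≠ (n : ℝ))
    (r : ℝ) (hr : 0 < r) (A B : PowerSeries ℝ)
    (hA : Summable fun k : ℕ => |PowerSeries.coeff k A / ffall t k| * r ^ k)
    (hB : Summable fun k : ℕ => |PowerSeries.coeff k B / ffall t k| * r ^ k) :
    (Summable fun k : ℕ => |PowerSeries.coeff k (tconv t A B) / ffall t k| * r ^ k) ∧
    (∑' k : ℕ, |PowerSeries.coeff k (tconv t A B) / ffall t k| * r ^ k) ≤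
      (∑' k : ℕ, |PowerSeries.coeff k A / ffall t k| * r ^ k) *
        ∑' k : ℕ, |PowerSeries.coeff k B / ffall t k| * r ^ k := by
  simp only [abs_coeff_div_ffall] at hA hB ⊢
  rw [divFfall_tconv ht]
  exact ⟨summable_norm_coeff_mul_mul_pow hr.le hA hB, tsum_norm_coeff_mul_mul_pow_le hr.le hA hB⟩
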